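/- arXiv:1308.4534 — 2 statements merged into one kernel-verified Lean document; each statement's English description precedes it below -/
import Mathlib

section
/- Let I be an HR instance and let J be its IP model. Then the map sending a matching M of I to the 0–1 vector x(M), defined by x_{i,p} = 1 if and only if resident r_i is assigned in M to pref(r_i,p) (for 1 ≤ p ≤ l(r_i)) and x_{i,l(r_i)+1} = 1 if and only if r_i is unassigned in M, is a bijection between the set of stable matchings of I and the set of 0–1 assignments satisfying all constraints of J. -/
open Classical

/-- `x` precedes `y` on the strict preference list `l`. -/
def Prefers {α : Type} [DecidableEq α] (l : List α) (x y : α) : Prop :=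
  x ∈ l ∧ y ∈ l ∧ l.idxOf x < l.idxOf y

/-- An HR instance: each hospital `h` has capacity `cap h`, each resident a strict
preference list `rpref r` over a subset of the hospitals, and each hospital a strict
preference list `hpref h` over exactly those residents that list it. -/
structure HRInst (R H : Type) where
  cap : H → ℕ
  rpref : R → List H
  hpref : H → List R

namespace HRInst

variable {R H : Type} [Fintype R] [DecidableEq R] [DecidableEq H]

/-- The set of residents assigned to hospital `h` in `M`. -/
def assignees (M : R → Option H) (h : H) : Finset R :=
  Finset.univ.filter fun r => M r = some h

/-- `M` is a matching of the HR instance `I`. -/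
def IsMatching (I : HRInst R H) (M : R → Option H) : Prop :=
  (∀ r h, M r = some h → h ∈ I.rpref r) ∧
  (∀ h, (assignees M h).card ≤ I.cap h)

/-- `(r,h)` is a blocking pair of `M`. -/
def Blocks (I : HRInst R H) (M : R → Option H) (r : R) (h : H) : Prop :=
  h ∈ I.rpref r ∧ M r ≠ some h ∧
  (M r = none ∨ ∃ h', M r = some h' ∧ Prefers (I.rpref r) h h') ∧
  ((assignees M h).card < I.cap h ∨ ∃ r' ∈ assignees M h, Prefers (I.hpref h) r r')

/-- `M` is a stable matching of the HR instance `I`. -/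
def Stable (I : HRInst R H) (M : R → Option H) : Prop :=
  I.IsMatching M ∧ ∀ r h, ¬ I.Blocks M r h

/-- The type of 0–1 assignments to the variables `x_{i,p}` of the IP model: one
variable for each resident `r` and each position `p` of its preference list,
together with the extra position `l(r)+1` meaning "unassigned". -/
def IPVars (I : HRInst R H) : Type :=
  ∀ r : R, Fin ((I.rpref r).length + 1) → Bool

/-- Feasibility of a 0–1 assignment for the IP model `J` of the HR instance `I`:
(a) each resident is assigned exactly one position; (b) each hospital `h` receives at
most `cap h` residents; (c) the stability constraints
`c_j · Σ_{p'>p} x_{i,p'} ≤ Σ_{(i',p'') : pref(r_{i'},p'') = h_j, rank < rank(h_j,r_i)} x_{i',p''}`. -/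
def Feasible (I : HRInst R H) (x : IPVars I) : Prop :=
  (∀ r : R, (∑ p, if x r p then 1 else 0) = 1) ∧
  (∀ h : H,
    (∑ r : R, ∑ p : Fin ((I.rpref r).length + 1),
      if (I.rpref r)[p.val]? = some h ∧ x r p then 1 else 0) ≤ I.cap h) ∧
  (∀ r : R, ∀ p : Fin ((I.rpref r).length + 1), ∀ h : H,
    (I.rpref r)[p.val]? = some h →
    I.cap h * (∑ p' : Fin ((I.rpref r).length + 1), if p.val < p'.val ∧ x r p' then 1 else 0) ≤
      ∑ r' : R, ∑ p'' : Fin ((I.rpref r').length + 1),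
        if (I.rpref r')[p''.val]? = some h ∧
            (I.hpref h).idxOf r' < (I.hpref h).idxOf r ∧ x r' p'' then 1 else 0)

/-- The 0–1 vector `x(M)` associated with a matching `M`: `x_{i,p} = 1` iff `r_i` is
assigned in `M` to `pref(r_i,p)`, and `x_{i,l(r_i)+1} = 1` iff `r_i` is unassigned. -/
def xOf (I : HRInst R H) (M : R → Option H) : IPVars I := fun r p =>
  if hp : p.val < (I.rpref r).length
  then decide (M r = some ((I.rpref r).get ⟨p.val, hp⟩))
  else decide (M r = none)

end HRInst

/-!
For an assignment `M` that only uses acceptable hospitals, row `r` of `x(M)` is the indicator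
of the position of `M r` on `r`'s list (the last position if `r` is unassigned), so (a) holds and
the sum in (b) counts the assignees of `h`. Taking `p` to be the position of `h` on `r`'s list,
the left side of (c) is `c_h` exactly when `r` is unassigned or prefers `h` to its partner, and
the right side counts the assignees of `h` that `h` prefers to `r`; since `h` has at most `c_h`
assignees, (c) says that `h` is full with residents it prefers to `r`, i.e. `(r, h)` does not
block `M`. Conversely, (a) makes every row a one-hot vector, which decodes to a unique acceptable
assignment.
-/

open scoped Finset

theorem List.Nodup.getElem?_eq_getElem?_iff {α : Type*} {l : List α} (hl : l.Nodup) {i j : ℕ}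
    (hi : i ≤ l.length) (hj : j ≤ l.length) : l[i]? = l[j]? ↔ i = j := by
  rcases hi.lt_or_eq with hi | rfl
  · exact List.getElem?_inj hi hl
  · rw [List.getElem?_eq_none le_rfl, eq_comm, List.getElem?_eq_none_iff]
    omega

theorem List.Nodup.forall_getElem?_eq_some_iff {α : Type*} [DecidableEq α] {l : List α}
    (hl : l.Nodup) {Φ : Fin (l.length + 1) → α → Prop} :
    (∀ p a, l[p.val]? = some a → Φ p a) ↔
      ∀ a ∈ l, Φ ⟨l.idxOf a, Nat.lt_succ_of_le List.idxOf_le_length⟩ a := by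
  refine ⟨fun h a ha => h _ a (List.getElem?_idxOf ha), fun h p a hp => ?_⟩
  have ha := List.mem_of_getElem? hp
  rw [← List.getElem?_idxOf ha, hl.getElem?_eq_getElem?_iff (Nat.lt_succ_iff.mp p.isLt)
    List.idxOf_le_length] at hp
  convert h a ha

theorem not_prefers_iff_idxOf_lt {α : Type} [DecidableEq α] {l : List α} {x y : α}
    (hx : x ∈ l) (hy : y ∈ l) (hxy : x ≠ y) : ¬ Prefers l x y ↔ l.idxOf y < l.idxOf x := by
  have hidx : l.idxOf x ≠ l.idxOf y := (List.idxOf_inj hx).not.mpr hxy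
  simp only [Prefers, hx, hy, true_and, not_lt]
  omega

theorem Finset.le_card_filter_iff_of_card_le {α : Type*} {s : Finset α} {p : α → Prop}
    [DecidablePred p] {c : ℕ} (hs : #s ≤ c) : c ≤ #(s.filter p) ↔ c ≤ #s ∧ ∀ a ∈ s, p a := by
  refine ⟨fun h => ⟨h.trans (Finset.card_filter_le s p), ?_⟩, fun ⟨hc, hp⟩ => ?_⟩
  · exact Finset.filter_eq_self.mp
      (Finset.eq_of_subset_of_card_le (Finset.filter_subset p s) (hs.trans h))
  · rwa [Finset.filter_eq_self.mpr hp]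

section OneHot

variable {ι : Type*} [Fintype ι] {b : ι → Bool}

theorem sum_ite_eq_one_iff_exists_forall_iff_eq :
    (∑ i, if b i then 1 else 0 : ℕ) = 1 ↔ ∃ j, ∀ i, b i = true ↔ i = j := by
  rw [Finset.sum_boole, Nat.cast_id, Finset.card_eq_one]
  simp [Finset.ext_iff]

theorem sum_ite_and_eq_ite_of_forall_iff_eq {j : ι} (hb : ∀ i, b i = true ↔ i = j)
    (P : ι → Prop) [DecidablePred P] :
    (∑ i, if P i ∧ b i then 1 else 0 : ℕ) = if P j then 1 else 0 := by
  simp only [hb, and_comm (a := P _), ite_and, Finset.sum_ite_eq', Finset.mem_univ, if_true]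

end OneHot

namespace HRInst

variable {R H : Type} [DecidableEq H] (I : HRInst R H) {M : R → Option H}

def IsAcceptable (M : R → Option H) : Prop :=
  ∀ r h, M r = some h → h ∈ I.rpref r

def position (M : R → Option H) (r : R) : Fin ((I.rpref r).length + 1) :=
  ⟨(M r).elim (I.rpref r).length (I.rpref r).idxOf,
    by cases M r <;> simp [List.idxOf_le_length]⟩

theorem xOf_eq_true_iff (M : R → Option H) (r : R) (p : Fin ((I.rpref r).length + 1)) :
    I.xOf M r p = true ↔ (I.rpref r)[p.val]? = M r := by
  unfold xOf
  split_ifs with hp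
  · simp [List.getElem?_eq_getElem hp, eq_comm]
  · simp [List.getElem?_eq_none (not_lt.mp hp), eq_comm]

theorem getElem?_position (hM : I.IsAcceptable M) (r : R) :
    (I.rpref r)[(I.position M r).val]? = M r := by
  cases hMr : M r with
  | none => simp [position, hMr]
  | some h => simp [position, hMr, hM r h hMr]

theorem xOf_eq_true_iff_eq_position (hM : I.IsAcceptable M) {r : R} (hnd : (I.rpref r).Nodup)
    (p : Fin ((I.rpref r).length + 1)) : I.xOf M r p = true ↔ p = I.position M r := by
  rw [xOf_eq_true_iff, ← I.getElem?_position hM r, Fin.ext_iff,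
    hnd.getElem?_eq_getElem?_iff (Nat.lt_succ_iff.mp p.isLt)
      (Nat.lt_succ_iff.mp (I.position M r).isLt)]

theorem xOf_injOn : Set.InjOn I.xOf {M | I.IsAcceptable M} := by
  intro M₁ hM₁ M₂ _ hx
  funext r
  have h₁ := (I.xOf_eq_true_iff M₁ r _).mpr (I.getElem?_position hM₁ r)
  rwa [hx, xOf_eq_true_iff, I.getElem?_position hM₁] at h₁

theorem exists_isAcceptable_xOf_eq (hnd : ∀ r, (I.rpref r).Nodup) {x : I.IPVars}
    (hx : ∀ r, (∑ p, if x r p then 1 else 0) = 1) : ∃ M, I.IsAcceptable M ∧ I.xOf M = x := by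
  choose q hq using fun r => sum_ite_eq_one_iff_exists_forall_iff_eq.mp (hx r)
  refine ⟨fun r => (I.rpref r)[(q r).val]?, fun r h => List.mem_of_getElem?, ?_⟩
  funext r p
  rw [Bool.eq_iff_iff, xOf_eq_true_iff, hq, Fin.ext_iff,
    (hnd r).getElem?_eq_getElem?_iff (Nat.lt_succ_iff.mp p.isLt) (Nat.lt_succ_iff.mp (q r).isLt)]

theorem idxOf_lt_position_iff (hM : I.IsAcceptable M) {r : R} {h : H} (hh : h ∈ I.rpref r) :
    (I.rpref r).idxOf h < (I.position M r).val ↔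
      M r ≠ some h ∧ (M r = none ∨ ∃ h', M r = some h' ∧ Prefers (I.rpref r) h h') := by
  cases hMr : M r with
  | none => simp [position, hMr, List.idxOf_lt_length_iff.mpr hh]
  | some h' =>
    simp only [position, hMr, Option.elim, ne_eq, Option.some.injEq, reduceCtorEq, false_or,
      exists_eq_left', Prefers, hh, hM r h' hMr, true_and]
    exact ⟨fun hlt => ⟨by rintro rfl; exact lt_irrefl _ hlt, hlt⟩, And.right⟩

theorem sum_xOf_eq_one (hM : I.IsAcceptable M) (hnd : ∀ r, (I.rpref r).Nodup) (r : R) :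
    (∑ p, if I.xOf M r p then 1 else 0) = 1 :=
  sum_ite_eq_one_iff_exists_forall_iff_eq.mpr ⟨_, I.xOf_eq_true_iff_eq_position hM (hnd r)⟩

theorem sum_lt_and_xOf_eq_ite (hM : I.IsAcceptable M) (hnd : ∀ r, (I.rpref r).Nodup) (r : R)
    (p : Fin ((I.rpref r).length + 1)) :
    (∑ p' : Fin ((I.rpref r).length + 1), if p.val < p'.val ∧ I.xOf M r p' then 1 else 0) =
      if p.val < (I.position M r).val then 1 else 0 :=
  sum_ite_and_eq_ite_of_forall_iff_eq (I.xOf_eq_true_iff_eq_position hM (hnd r)) _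

variable [Fintype R]

theorem sum_xOf_eq_card_assignees (hM : I.IsAcceptable M) (hnd : ∀ r, (I.rpref r).Nodup)
    (h : H) :
    (∑ r : R, ∑ p : Fin ((I.rpref r).length + 1),
      if (I.rpref r)[p.val]? = some h ∧ I.xOf M r p then 1 else 0) = #(assignees M h) := by
  simp only [sum_ite_and_eq_ite_of_forall_iff_eq (I.xOf_eq_true_iff_eq_position hM (hnd _)),
    I.getElem?_position hM, Finset.sum_boole, Nat.cast_id, assignees]

variable [DecidableEq R]

theorem sum_xOf_eq_card_filter_assignees (hM : I.IsAcceptable M) (hnd : ∀ r, (I.rpref r).Nodup)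
    (h : H) (r : R) :
    (∑ r' : R, ∑ p'' : Fin ((I.rpref r').length + 1),
      if (I.rpref r')[p''.val]? = some h ∧
          (I.hpref h).idxOf r' < (I.hpref h).idxOf r ∧ I.xOf M r' p'' then 1 else 0) =
      #((assignees M h).filter fun r' => (I.hpref h).idxOf r' < (I.hpref h).idxOf r) := by
  simp only [← and_assoc,
    sum_ite_and_eq_ite_of_forall_iff_eq (I.xOf_eq_true_iff_eq_position hM (hnd _)),
    I.getElem?_position hM, Finset.sum_boole, Nat.cast_id, assignees, Finset.filter_filter]

theorem not_blocks_iff (hmutual : ∀ r h, h ∈ I.rpref r ↔ r ∈ I.hpref h) (hM : I.IsAcceptable M)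
    {r : R} {h : H} (hh : h ∈ I.rpref r) (hcap : #(assignees M h) ≤ I.cap h) :
    ¬ I.Blocks M r h ↔ ((I.rpref r).idxOf h < (I.position M r).val →
      I.cap h ≤ #((assignees M h).filter fun r' => (I.hpref h).idxOf r' < (I.hpref h).idxOf r)) := by
  rw [I.idxOf_lt_position_iff hM hh, Finset.le_card_filter_iff_of_card_le hcap, and_imp]
  simp only [Blocks, hh, true_and, not_and, not_or, not_exists, not_lt]
  refine imp_congr_right fun hne => imp_congr_right fun _ => and_congr_right fun _ =>
    forall₂_congr fun r' hr' => ?_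
  have hr'h : M r' = some h := (Finset.mem_filter.mp hr').2
  exact not_prefers_iff_idxOf_lt ((hmutual r h).mp hh) ((hmutual r' h).mp (hM r' h hr'h))
    (by rintro rfl; exact hne hr'h)

theorem feasible_xOf_iff_stable (hnd : ∀ r, (I.rpref r).Nodup)
    (hmutual : ∀ r h, h ∈ I.rpref r ↔ r ∈ I.hpref h) (hM : I.IsAcceptable M) :
    I.Feasible (I.xOf M) ↔ I.Stable M := by
  simp only [Feasible, Stable, IsMatching, I.sum_xOf_eq_one hM hnd, I.sum_lt_and_xOf_eq_ite hM hnd,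
    I.sum_xOf_eq_card_assignees hM hnd, I.sum_xOf_eq_card_filter_assignees hM hnd,
    implies_true, true_and]
  rw [and_assoc, and_iff_right (show ∀ r h, M r = some h → h ∈ I.rpref r from hM)]
  refine and_congr_right fun hcap => forall_congr' fun r => ?_
  rw [(hnd r).forall_getElem?_eq_some_iff]
  refine forall_congr' fun h => ?_
  by_cases hh : h ∈ I.rpref r
  · rw [I.not_blocks_iff hmutual hM hh (hcap h)]
    simp only [hh, true_implies, mul_ite, mul_one, mul_zero]
    split_ifs with hlt <;> simp [hlt]
  · simp [hh, Blocks]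

end HRInst

theorem stable_matchings_biject_feasible_solutions_general {R H : Type}
    [Fintype R] [DecidableEq R] [DecidableEq H] (I : HRInst R H)
    (hrnodup : ∀ r, (I.rpref r).Nodup)
    (hmutual : ∀ r h, h ∈ I.rpref r ↔ r ∈ I.hpref h) :
    Set.BijOn (I.xOf) {M | I.Stable M} {x | I.Feasible x} := by
  have hacc : ∀ M, I.Stable M → I.IsAcceptable M := fun M hM => hM.1.1
  refine ⟨fun M hM => (I.feasible_xOf_iff_stable hrnodup hmutual (hacc M hM)).mpr hM,
    I.xOf_injOn.mono hacc, fun x hx => ?_⟩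
  obtain ⟨M, hM, rfl⟩ := I.exists_isAcceptable_xOf_eq hrnodup hx.1
  exact ⟨M, (I.feasible_xOf_iff_stable hrnodup hmutual hM).mp hx, rfl⟩

/-- The map `M ↦ x(M)` is a bijection between the set of stable matchings of the HR
instance `I` and the set of 0–1 assignments satisfying all constraints of its IP
model `J`. -/
theorem stable_matchings_biject_feasible_solutions {R H : Type}
    [Fintype R] [DecidableEq R] [DecidableEq H] (I : HRInst R H)
    (hcap : ∀ h, 1 ≤ I.cap h)
    (hrnodup : ∀ r, (I.rpref r).Nodup) (hhnodup : ∀ h, (I.hpref h).Nodup)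
    (hmutual : ∀ r h, h ∈ I.rpref r ↔ r ∈ I.hpref h) :
    Set.BijOn (I.xOf) {M | I.Stable M} {x | I.Feasible x} :=
  stable_matchings_biject_feasible_solutions_general I hrnodup hmutual
end

section
/- Let I be a (many-to-one) HRC instance and let I' be the one-to-one HRC instance obtained from I by the cloning construction. Then I admits an MM-stable matching if and only if I' admits an MM-stable matching. -/
/-- A (many-to-one) HRC instance: hospitals with capacities, residents partitioned
into single residents and ordered couples, with strict preference lists. -/
structure HRCInst (R H : Type) where
  cap : H → ℕ
  singles : List R
  couples : List (R × R)
  singlePref : R → List H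
  couplePref : R × R → List (H × H)
  hospPref : H → List R

namespace HRCInst

variable {R H : Type} [Fintype R] [DecidableEq R] [DecidableEq H]

/-- The set of residents assigned to hospital `h` in `M`. -/
def assignees (M : R → Option H) (h : H) : Finset R :=
  Finset.univ.filter fun r => M r = some h

/-- `M` is a matching of the instance `I`. -/
def IsMatching (I : HRCInst R H) (M : R → Option H) : Prop :=
  (∀ r ∈ I.singles, ∀ h, M r = some h → h ∈ I.singlePref r) ∧
  (∀ c ∈ I.couples,
    (M c.1 = none ∧ M c.2 = none) ∨
    ∃ hp ∈ I.couplePref c, M c.1 = some hp.1 ∧ M c.2 = some hp.2) ∧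
  (∀ h, (assignees M h).card ≤ I.cap h) ∧
  (∀ r, (M r).isSome → r ∈ I.singles ∨ ∃ c ∈ I.couples, r = c.1 ∨ r = c.2)

/-- Hospital `h` is under-subscribed in `M`. -/
def UnderSub (I : HRCInst R H) (M : R → Option H) (h : H) : Prop :=
  (assignees M h).card < I.cap h

/-- Hospital `h` prefers `r` to `r'`. -/
def HPrefers (I : HRCInst R H) (h : H) (r r' : R) : Prop :=
  Prefers (I.hospPref h) r r'

/-- MM-blocking configuration of type (1): a single resident and a hospital. -/
def MMBlock1 (I : HRCInst R H) (M : R → Option H) : Prop :=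
  ∃ r ∈ I.singles, ∃ h ∈ I.singlePref r,
    (M r = none ∨ ∃ h', M r = some h' ∧ Prefers (I.singlePref r) h h') ∧
    (I.UnderSub M h ∨ ∃ r' ∈ assignees M h, I.HPrefers h r r')

/-- MM-blocking configuration of type (2): a couple and a hospital, one member
keeping its assignment. -/
def MMBlock2 (I : HRCInst R H) (M : R → Option H) : Prop :=
  ∃ c ∈ I.couples, ∃ hi hj, M c.1 = some hi ∧ M c.2 = some hj ∧ ∃ hk,
    ((Prefers (I.couplePref c) (hk, hj) (hi, hj) ∧
       (I.UnderSub M hk ∨ ∃ r' ∈ (assignees M hk).erase c.2, I.HPrefers hk c.1 r')) ∨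
     (Prefers (I.couplePref c) (hi, hk) (hi, hj) ∧
       (I.UnderSub M hk ∨ ∃ r' ∈ (assignees M hk).erase c.1, I.HPrefers hk c.2 r')))

/-- The couple `c` is jointly unassigned in `M`, or jointly prefers the pair `hp`
(on its joint list) to its assigned pair. -/
def CoupleWants (I : HRCInst R H) (M : R → Option H) (c : R × R) (hp : H × H) : Prop :=
  hp ∈ I.couplePref c ∧
  ((M c.1 = none ∧ M c.2 = none) ∨
    ∃ hp' ∈ I.couplePref c, M c.1 = some hp'.1 ∧ M c.2 = some hp'.2 ∧
      Prefers (I.couplePref c) hp hp')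

/-- MM-blocking configuration of type (3): a couple and a pair of hospitals. -/
def MMBlock3 (I : HRCInst R H) (M : R → Option H) : Prop :=
  ∃ c ∈ I.couples, ∃ hk hl, M c.1 ≠ some hk ∧ M c.2 ≠ some hl ∧
    I.CoupleWants M c (hk, hl) ∧
    ((hk ≠ hl ∧
        (I.UnderSub M hk ∨ ∃ r' ∈ assignees M hk, I.HPrefers hk c.1 r') ∧
        (I.UnderSub M hl ∨ ∃ r' ∈ assignees M hl, I.HPrefers hl c.2 r')) ∨
     (hk = hl ∧ (assignees M hk).card + 2 ≤ I.cap hk) ∨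
     (hk = hl ∧ (assignees M hk).card + 1 = I.cap hk ∧
        ∃ r' ∈ assignees M hk, (I.HPrefers hk c.1 r' ∨ I.HPrefers hk c.2 r')) ∨
     (hk = hl ∧ (assignees M hk).card = I.cap hk ∧
        ∃ rs ∈ assignees M hk, ∃ rt ∈ assignees M hk, rs ≠ rt ∧
          I.HPrefers hk c.1 rs ∧ I.HPrefers hk c.2 rt))

/-- `M` is an MM-stable matching of the instance `I`. -/
def MMStable (I : HRCInst R H) (M : R → Option H) : Prop :=
  I.IsMatching M ∧ ¬ I.MMBlock1 M ∧ ¬ I.MMBlock2 M ∧ ¬ I.MMBlock3 M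

/-- BIS-blocking configuration of type (2). -/
def BISBlock2 (I : HRCInst R H) (M : R → Option H) : Prop :=
  ∃ c ∈ I.couples, ∃ hi hj, M c.1 = some hi ∧ M c.2 = some hj ∧ ∃ hk,
    ((Prefers (I.couplePref c) (hk, hj) (hi, hj) ∧
       ((hk ≠ hj ∧ (I.UnderSub M hk ∨ ∃ r' ∈ assignees M hk, I.HPrefers hk c.1 r')) ∨
        (hk = hj ∧ (I.UnderSub M hk ∨ ∃ r' ∈ (assignees M hk).erase c.2,
          I.HPrefers hk c.1 r' ∧ I.HPrefers hk c.2 r')))) ∨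
     (Prefers (I.couplePref c) (hi, hk) (hi, hj) ∧
       ((hk ≠ hi ∧ (I.UnderSub M hk ∨ ∃ r' ∈ assignees M hk, I.HPrefers hk c.2 r')) ∨
        (hk = hi ∧ (I.UnderSub M hk ∨ ∃ r' ∈ (assignees M hk).erase c.1,
          I.HPrefers hk c.1 r' ∧ I.HPrefers hk c.2 r')))))

/-- BIS-blocking configuration of type (3). -/
def BISBlock3 (I : HRCInst R H) (M : R → Option H) : Prop :=
  ∃ c ∈ I.couples, ∃ hk hl, M c.1 ≠ some hk ∧ M c.2 ≠ some hl ∧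
    I.CoupleWants M c (hk, hl) ∧
    ((hk ≠ hl ∧
        (I.UnderSub M hk ∨ ∃ r' ∈ assignees M hk, I.HPrefers hk c.1 r') ∧
        (I.UnderSub M hl ∨ ∃ r' ∈ assignees M hl, I.HPrefers hl c.2 r')) ∨
     (hk = hl ∧ (assignees M hk).card + 2 ≤ I.cap hk) ∨
     (hk = hl ∧ (assignees M hk).card + 1 = I.cap hk ∧
        ∃ r' ∈ assignees M hk, I.HPrefers hk c.1 r' ∧ I.HPrefers hk c.2 r') ∨
     (hk = hl ∧ (assignees M hk).card = I.cap hk ∧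
        ((∃ rp ∈ assignees M hk,
            (∃ rq ∈ assignees M hk, (rp, rq) ∈ I.couples ∨ (rq, rp) ∈ I.couples) ∧
            I.HPrefers hk c.1 rp ∧ I.HPrefers hk c.2 rp) ∨
         (∃ u ∈ assignees M hk, ∃ v ∈ assignees M hk, u ≠ v ∧
            (let w := if (I.hospPref hk).idxOf c.1 ≤ (I.hospPref hk).idxOf c.2
              then c.2 else c.1
             I.HPrefers hk w u ∧ I.HPrefers hk w v)))))

/-- `M` is a BIS-stable matching of the instance `I`. -/
def BISStable (I : HRCInst R H) (M : R → Option H) : Prop :=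
  I.IsMatching M ∧ ¬ I.MMBlock1 M ∧ ¬ I.BISBlock2 M ∧ ¬ I.BISBlock3 M

/-- Well-formedness of an HRC instance: positive capacities, strict (duplicate-free)
preference lists, the singles and couples partition the participating residents, and
each hospital's list consists of exactly those residents that list it. -/
def WellFormed (I : HRCInst R H) : Prop :=
  (∀ h, 1 ≤ I.cap h) ∧
  (∀ r, (I.singlePref r).Nodup) ∧
  (∀ c, (I.couplePref c).Nodup) ∧
  (∀ h, (I.hospPref h).Nodup) ∧
  I.singles.Nodup ∧ I.couples.Nodup ∧
  (∀ c ∈ I.couples, c.1 ≠ c.2) ∧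
  (∀ c ∈ I.couples, ∀ c' ∈ I.couples, c ≠ c' →
    c.1 ≠ c'.1 ∧ c.1 ≠ c'.2 ∧ c.2 ≠ c'.1 ∧ c.2 ≠ c'.2) ∧
  (∀ r ∈ I.singles, ∀ c ∈ I.couples, r ≠ c.1 ∧ r ≠ c.2) ∧
  (∀ h r, r ∈ I.hospPref h ↔
    ((r ∈ I.singles ∧ h ∈ I.singlePref r) ∨
     (∃ c ∈ I.couples,
       (r = c.1 ∧ ∃ hp ∈ I.couplePref c, hp.1 = h) ∨
       (r = c.2 ∧ ∃ hp ∈ I.couplePref c, hp.2 = h))))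

end HRCInst

namespace HRCInst

variable {R H : Type} [Fintype R] [DecidableEq R] [DecidableEq H]

/-- The ordered list of clone pairs replacing a pair `(h₁,h₂)` with `h₁ ≠ h₂`:
`(h_{1,1},h_{2,1}),(h_{1,2},h_{2,1}),…,(h_{1,c₁},h_{2,1}),(h_{1,1},h_{2,2}),…,(h_{1,c₁},h_{2,c₂})`. -/
def clonePairsDiff (I : HRCInst R H) (h1 h2 : H) : List ((H × ℕ) × (H × ℕ)) :=
  (List.range (I.cap h2)).flatMap fun k2 =>
    (List.range (I.cap h1)).map fun k1 => ((h1, k1), (h2, k2))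

/-- The ordered list of clone pairs replacing a pair `(h,h)`: all pairs of distinct
clones, in the order `(h_2,h_1),(h_3,h_1),…,(h_c,h_1),(h_1,h_2),(h_3,h_2),…,(h_{c−1},h_c)`. -/
def clonePairsSame (I : HRCInst R H) (h : H) : List ((H × ℕ) × (H × ℕ)) :=
  (List.range (I.cap h)).flatMap fun k2 =>
    ((List.range (I.cap h)).filter fun k1 => k1 ≠ k2).map fun k1 => ((h, k1), (h, k2))

/-- The one-to-one instance `I'` obtained from `I` by the cloning construction:
each hospital `h` of capacity `c` is replaced by clones `(h,0),…,(h,c−1)` of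
capacity 1 inheriting `h`'s preference list, and resident preference lists are
expanded accordingly. -/
def cloned (I : HRCInst R H) : HRCInst R (H × ℕ) where
  cap := fun _ => 1
  singles := I.singles
  couples := I.couples
  singlePref := fun r =>
    (I.singlePref r).flatMap fun h => (List.range (I.cap h)).map fun k => (h, k)
  couplePref := fun c =>
    (I.couplePref c).flatMap fun hp =>
      if hp.1 = hp.2 then I.clonePairsSame hp.1 else I.clonePairsDiff hp.1 hp.2
  hospPref := fun h => I.hospPref h.1

end HRCInst

/-!
Forgetting clone indices projects a matching `M'` of the cloned instance to a matching of `I`.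
Since every clone has capacity one, a hospital has a free seat, or an assignee it likes less than
a given resident, exactly when one of its clones does; counting vacant clones does the same for
the joint conditions (3b)–(3d). Hence every blocking configuration of the projection lifts to one
of `M'`, and MM-stable matchings of the cloned instance project to MM-stable ones of `I`.

Conversely, lift an MM-stable matching `M` by seating the assignees of each hospital on its clones
in the hospital's order of preference. Then no resident is wanted by a lower clone of its own
hospital, which rules out the blocking configurations of the lift that only move residents between
clones of one hospital. Every other one projects to a blocking configuration of `M` of the same
type, except that a couple one of whose members stays at its hospital gives one of type (2).
-/

namespace Prefers

variable {α β : Type} [DecidableEq α] [DecidableEq β] {l l₁ l₂ : List α} {x y z : α}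

instance (l : List α) (x y : α) : Decidable (Prefers l x y) :=
  inferInstanceAs (Decidable (_ ∧ _ ∧ _))

theorem irrefl (x : α) : ¬ Prefers l x x := fun h => (lt_irrefl _) h.2.2

theorem trans (hxy : Prefers l x y) (hyz : Prefers l y z) : Prefers l x z :=
  ⟨hxy.1, hyz.2.1, hxy.2.2.trans hyz.2.2⟩

theorem total (hx : x ∈ l) (hy : y ∈ l) (hxy : x ≠ y) : Prefers l x y ∨ Prefers l y x := by
  have : l.idxOf x ≠ l.idxOf y := fun h => hxy ((List.idxOf_inj hx).1 h)
  rcases this.lt_or_gt with h | h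
  · exact Or.inl ⟨hx, hy, h⟩
  · exact Or.inr ⟨hy, hx, h⟩

theorem append_iff_of_mem_of_mem (hx : x ∈ l₁) (hy : y ∈ l₁) :
    Prefers (l₁ ++ l₂) x y ↔ Prefers l₁ x y := by
  simp [Prefers, List.idxOf_append_of_mem, hx, hy]

theorem append_iff_of_mem_of_notMem (hx : x ∈ l₁) (hy : y ∉ l₁) :
    Prefers (l₁ ++ l₂) x y ↔ y ∈ l₂ := by
  have := List.idxOf_lt_length_iff.2 hx
  simp only [Prefers, List.mem_append, List.idxOf_append_of_mem hx,
    List.idxOf_append_of_notMem hy, hx, hy, true_or, false_or, true_and]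
  exact ⟨And.left, fun h => ⟨h, by omega⟩⟩

theorem not_append_of_notMem_of_mem (hx : x ∉ l₁) (hy : y ∈ l₁) : ¬ Prefers (l₁ ++ l₂) x y := by
  have := List.idxOf_lt_length_iff.2 hy
  simp only [Prefers, List.idxOf_append_of_mem hy, List.idxOf_append_of_notMem hx]
  omega

theorem append_iff_of_notMem_of_notMem (hx : x ∉ l₁) (hy : y ∉ l₁) :
    Prefers (l₁ ++ l₂) x y ↔ Prefers l₂ x y := by
  simp [Prefers, List.idxOf_append_of_notMem, hx, hy]

theorem map_iff {f : α → β} (hf : Function.Injective f) :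
    Prefers (l.map f) (f x) (f y) ↔ Prefers l x y := by
  have hidx : ∀ z, (l.map f).idxOf (f z) = l.idxOf z := by
    intro z
    induction l with
    | nil => rfl
    | cons a t ih =>
      by_cases h : a = z
      · simp [h]
      · rw [List.map_cons, List.idxOf_cons_ne _ (hf.ne h), List.idxOf_cons_ne _ h, ih]
  simp only [Prefers, List.mem_map_of_injective hf, hidx]

theorem iff_lt_of_pairwise_lt {γ : Type} [LinearOrder γ] {l : List γ} {x y : γ}
    (hl : l.Pairwise (· < ·)) : Prefers l x y ↔ x ∈ l ∧ y ∈ l ∧ x < y := by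
  have hmono : StrictMono fun i : Fin l.length => l[i] :=
    fun i j hij => List.pairwise_iff_getElem.1 hl i j i.2 j.2 hij
  refine and_congr_right fun hx => and_congr_right fun hy => ?_
  have hx' := List.idxOf_lt_length_iff.2 hx
  have hy' := List.idxOf_lt_length_iff.2 hy
  have := hmono.lt_iff_lt (a := ⟨_, hx'⟩) (b := ⟨_, hy'⟩)
  simp only [Fin.getElem_fin, List.getElem_idxOf, Fin.mk_lt_mk] at this
  exact this.symm

theorem flatMap_iff {l : List α} {f : α → List β} {g : β → α}
    (hg : ∀ a ∈ l, ∀ b ∈ f a, g b = a) {a b : α} {x y : β}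
    (ha : a ∈ l) (hb : b ∈ l) (hx : x ∈ f a) (hy : y ∈ f b) :
    Prefers (l.flatMap f) x y ↔ Prefers l a b ∨ (a = b ∧ Prefers (f a) x y) := by
  induction l with
  | nil => simp at ha
  | cons c t ih =>
    have hblock : ∀ d ∈ c :: t, ∀ z ∈ f d, (z ∈ f c ↔ d = c) := fun d hd z hz =>
      ⟨fun hzc => (hg d hd z hz).symm.trans (hg c List.mem_cons_self z hzc), fun h => h ▸ hz⟩
    have hxc := hblock a ha x hx
    have hyc := hblock b hb y hy
    rw [List.flatMap_cons, ← List.singleton_append (l := t)]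
    by_cases hac : a = c <;> by_cases hbc : b = c
    · subst hac hbc
      simp [append_iff_of_mem_of_mem hx hy, irrefl]
    · subst hac
      have hbt : b ∈ t := (List.mem_cons.1 hb).resolve_left hbc
      rw [append_iff_of_mem_of_notMem hx (by rwa [hyc]),
        append_iff_of_mem_of_notMem (List.mem_singleton_self a) (by simpa using hbc)]
      exact iff_of_true (List.mem_flatMap.2 ⟨b, hbt, hy⟩) (Or.inl hbt)
    · subst hbc
      simp only [not_append_of_notMem_of_mem (by rwa [hxc]) hy, hac, false_and, or_false,
        false_iff]
      exact not_append_of_notMem_of_mem (by simpa using hac) (List.mem_singleton_self b)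
    · rw [append_iff_of_notMem_of_notMem (by rwa [hxc]) (by rwa [hyc]),
        append_iff_of_notMem_of_notMem (by simpa using hac) (by simpa using hbc)]
      exact ih (fun d hd => hg d (List.mem_cons_of_mem c hd))
        ((List.mem_cons.1 ha).resolve_left hac) ((List.mem_cons.1 hb).resolve_left hbc)

end Prefers

namespace HRCInst

section ClonedPreferences

variable {R H : Type} [DecidableEq H] (I : HRCInst R H)

theorem mem_cloned_singlePref {r : R} {p : H × ℕ} :
    p ∈ I.cloned.singlePref r ↔ p.1 ∈ I.singlePref r ∧ p.2 < I.cap p.1 := by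
  obtain ⟨h, k⟩ := p
  simp [cloned]

theorem prefers_cloned_singlePref_iff {r : R} {p q : H × ℕ}
    (hp : p ∈ I.cloned.singlePref r) (hq : q ∈ I.cloned.singlePref r) :
    Prefers (I.cloned.singlePref r) p q ↔
      Prefers (I.singlePref r) p.1 q.1 ∨ (p.1 = q.1 ∧ p.2 < q.2) := by
  obtain ⟨h, k⟩ := p
  obtain ⟨h', k'⟩ := q
  rw [mem_cloned_singlePref] at hp hq
  have hblock : ∀ h ∈ I.singlePref r, ∀ b ∈ (List.range (I.cap h)).map (fun k => (h, k)),
      b.1 = h := by simp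
  rw [cloned, Prefers.flatMap_iff hblock hp.1 hq.1 (by simpa using hp.2) (by simpa using hq.2)]
  refine or_congr_right (and_congr_right fun hh => ?_)
  subst hh
  rw [Prefers.map_iff (Prod.mk_right_injective h),
    Prefers.iff_lt_of_pairwise_lt List.pairwise_lt_range]
  simp [hp.2, hq.2]

theorem prefers_clonePairGrid_iff {n : ℕ} {L : ℕ → List ℕ} (hL : ∀ k, (L k).Pairwise (· < ·))
    {h₁ h₂ : H} {p q : (H × ℕ) × (H × ℕ)}
    (hp : p ∈ (List.range n).flatMap fun k₂ => (L k₂).map fun k₁ => ((h₁, k₁), (h₂, k₂)))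
    (hq : q ∈ (List.range n).flatMap fun k₂ => (L k₂).map fun k₁ => ((h₁, k₁), (h₂, k₂))) :
    Prefers ((List.range n).flatMap fun k₂ => (L k₂).map fun k₁ => ((h₁, k₁), (h₂, k₂))) p q ↔
      p.2.2 < q.2.2 ∨ (p.2.2 = q.2.2 ∧ p.1.2 < q.1.2) := by
  simp only [List.mem_flatMap, List.mem_map] at hp hq
  obtain ⟨k₂, hk₂, k₁, hk₁, rfl⟩ := hp
  obtain ⟨k₂', hk₂', k₁', hk₁', rfl⟩ := hq
  have hblock : ∀ k ∈ List.range n, ∀ b ∈ (L k).map (fun k₁ => ((h₁, k₁), (h₂, k))),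
      b.2.2 = k := by simp
  have hinj : ∀ k : ℕ, Function.Injective fun k₁ : ℕ => ((h₁, k₁), (h₂, k)) :=
    fun k a b h => by simpa using h
  rw [Prefers.flatMap_iff hblock hk₂ hk₂' (List.mem_map_of_mem hk₁) (List.mem_map_of_mem hk₁'),
    Prefers.iff_lt_of_pairwise_lt List.pairwise_lt_range]
  refine or_congr (by simp [hk₂, hk₂']) (and_congr_right fun hk => ?_)
  subst hk
  rw [Prefers.map_iff (hinj k₂), Prefers.iff_lt_of_pairwise_lt (hL k₂)]
  simp [hk₁, hk₁']

def clonePairs (hp : H × H) : List ((H × ℕ) × (H × ℕ)) :=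
  if hp.1 = hp.2 then I.clonePairsSame hp.1 else I.clonePairsDiff hp.1 hp.2

theorem cloned_couplePref (c : R × R) :
    I.cloned.couplePref c = (I.couplePref c).flatMap I.clonePairs := rfl

theorem mem_clonePairs {hp : H × H} {p : (H × ℕ) × (H × ℕ)} :
    p ∈ I.clonePairs hp ↔
      (p.1.1, p.2.1) = hp ∧ p.1.2 < I.cap hp.1 ∧ p.2.2 < I.cap hp.2 ∧ p.1 ≠ p.2 := by
  obtain ⟨⟨h₁, k₁⟩, ⟨h₂, k₂⟩⟩ := p
  obtain ⟨g₁, g₂⟩ := hp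
  unfold clonePairs clonePairsSame clonePairsDiff
  split_ifs with hg
  · obtain rfl : g₁ = g₂ := hg
    simp only [List.mem_flatMap, List.mem_range, List.mem_filter, List.mem_map]
    grind
  · simp only [List.mem_flatMap, List.mem_range, List.mem_map]
    grind

theorem prefers_clonePairs_iff {hp : H × H} {p q : (H × ℕ) × (H × ℕ)}
    (hpm : p ∈ I.clonePairs hp) (hqm : q ∈ I.clonePairs hp) :
    Prefers (I.clonePairs hp) p q ↔ p.2.2 < q.2.2 ∨ (p.2.2 = q.2.2 ∧ p.1.2 < q.1.2) := by
  unfold clonePairs clonePairsSame clonePairsDiff at *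
  split_ifs at * with hg
  · exact prefers_clonePairGrid_iff (fun k => List.pairwise_lt_range.filter _) hpm hqm
  · exact prefers_clonePairGrid_iff (fun _ => List.pairwise_lt_range) hpm hqm

theorem mem_cloned_couplePref {c : R × R} {p : (H × ℕ) × (H × ℕ)} :
    p ∈ I.cloned.couplePref c ↔
      (p.1.1, p.2.1) ∈ I.couplePref c ∧ p.1.2 < I.cap p.1.1 ∧ p.2.2 < I.cap p.2.1 ∧
        p.1 ≠ p.2 := by
  rw [cloned_couplePref, List.mem_flatMap]
  constructor
  · rintro ⟨hp, hmem, hp'⟩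
    obtain ⟨rfl, h⟩ := I.mem_clonePairs.1 hp'
    exact ⟨hmem, h⟩
  · rintro ⟨hmem, h⟩
    exact ⟨_, hmem, I.mem_clonePairs.2 ⟨rfl, h⟩⟩

theorem prefers_cloned_couplePref_iff {c : R × R} {p q : (H × ℕ) × (H × ℕ)}
    (hp : p ∈ I.cloned.couplePref c) (hq : q ∈ I.cloned.couplePref c) :
    Prefers (I.cloned.couplePref c) p q ↔
      Prefers (I.couplePref c) (p.1.1, p.2.1) (q.1.1, q.2.1) ∨
        ((p.1.1, p.2.1) = (q.1.1, q.2.1) ∧ (p.2.2 < q.2.2 ∨ (p.2.2 = q.2.2 ∧ p.1.2 < q.1.2))) := by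
  have hblock : ∀ hp ∈ I.couplePref c, ∀ b ∈ I.clonePairs hp, (b.1.1, b.2.1) = hp :=
    fun _ _ _ hb => (I.mem_clonePairs.1 hb).1
  have hp' := (I.mem_clonePairs (hp := (p.1.1, p.2.1))).2 ⟨rfl, (I.mem_cloned_couplePref.1 hp).2⟩
  have hq' := (I.mem_clonePairs (hp := (q.1.1, q.2.1))).2 ⟨rfl, (I.mem_cloned_couplePref.1 hq).2⟩
  rw [cloned_couplePref, Prefers.flatMap_iff hblock (I.mem_cloned_couplePref.1 hp).1
    (I.mem_cloned_couplePref.1 hq).1 hp' hq']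
  refine or_congr_right (and_congr_right fun he => ?_)
  rw [← he] at hq'
  exact I.prefers_clonePairs_iff hp' hq'

end ClonedPreferences

theorem IsMatching.mem_couplePref {R H : Type} [Fintype R] [DecidableEq H] {I : HRCInst R H}
    {M : R → Option H} (hM : I.IsMatching M) {c : R × R} (hc : c ∈ I.couples) {h₁ h₂ : H}
    (h₁' : M c.1 = some h₁) (h₂' : M c.2 = some h₂) : (h₁, h₂) ∈ I.couplePref c := by
  rcases hM.2.1 c hc with ⟨hn, -⟩ | ⟨hp, hmem, e₁, e₂⟩
  · simp [hn] at h₁'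
  · rw [e₁, Option.some_inj] at h₁'
    rw [e₂, Option.some_inj] at h₂'
    rwa [← h₁', ← h₂']

def unclone {R H : Type} (M' : R → Option (H × ℕ)) : R → Option H :=
  fun r => (M' r).map Prod.fst

theorem unclone_eq_some {R H : Type} {M' : R → Option (H × ℕ)} {r : R} {h : H} :
    unclone M' r = some h ↔ ∃ k, M' r = some (h, k) := by
  simp [unclone, Option.map_eq_some_iff]

theorem unclone_eq_none {R H : Type} {M' : R → Option (H × ℕ)} {r : R} :
    unclone M' r = none ↔ M' r = none := by
  simp [unclone]

section Unclone

variable {R H : Type} [Fintype R] [DecidableEq H] (I : HRCInst R H) {M' : R → Option (H × ℕ)}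

theorem mem_assignees {M : R → Option H} {h : H} {r : R} : r ∈ assignees M h ↔ M r = some h := by
  simp [assignees]

theorem mem_hospPref_of_mem_assignees {M : R → Option H} (hwf : I.WellFormed)
    (hM : I.IsMatching M) {h : H} {r : R} (hr : r ∈ assignees M h) : r ∈ I.hospPref h := by
  obtain ⟨-, -, -, -, -, -, -, -, -, hhosp⟩ := hwf
  rw [mem_assignees] at hr
  refine (hhosp h r).2 ?_
  rcases hM.2.2.2 r (by simp [hr]) with hs | ⟨c, hc, rfl | rfl⟩
  · exact Or.inl ⟨hs, hM.1 r hs h hr⟩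
  · rcases hM.2.1 c hc with ⟨hn, -⟩ | ⟨hp, hmem, e, -⟩
    · simp [hn] at hr
    · exact Or.inr ⟨c, hc, Or.inl ⟨rfl, hp, hmem, by simpa [hr] using e.symm⟩⟩
  · rcases hM.2.1 c hc with ⟨-, hn⟩ | ⟨hp, hmem, -, e⟩
    · simp [hn] at hr
    · exact Or.inr ⟨c, hc, Or.inr ⟨rfl, hp, hmem, by simpa [hr] using e.symm⟩⟩

theorem mem_assignees_unclone {h : H} {r : R} :
    r ∈ assignees (unclone M') h ↔ ∃ k, M' r = some (h, k) := by
  rw [mem_assignees, unclone_eq_some]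

theorem cloned_underSub_iff {p : H × ℕ} : I.cloned.UnderSub M' p ↔ assignees M' p = ∅ := by
  simp [UnderSub, cloned]

theorem eq_of_mem_assignees_cloned (hM' : I.cloned.IsMatching M') {p : H × ℕ} {r r' : R}
    (hr : r ∈ assignees M' p) (hr' : r' ∈ assignees M' p) : r = r' :=
  Finset.card_le_one.1 (hM'.2.2.1 p) r hr r' hr'

theorem lt_cap_of_cloned_isMatching (hM' : I.cloned.IsMatching M') {r : R} {h : H} {k : ℕ}
    (hr : M' r = some (h, k)) : k < I.cap h := by
  rcases hM'.2.2.2 r (by simp [hr]) with hs | ⟨c, hc, rfl | rfl⟩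
  · exact (I.mem_cloned_singlePref.1 (hM'.1 r hs _ hr)).2
  · rcases hM'.2.1 c hc with ⟨hn, -⟩ | ⟨p, hp, e, -⟩
    · simp [hn] at hr
    · rw [hr, Option.some_inj] at e
      have := (I.mem_cloned_couplePref.1 hp).2.1
      rwa [← e] at this
  · rcases hM'.2.1 c hc with ⟨-, hn⟩ | ⟨p, hp, -, e⟩
    · simp [hn] at hr
    · rw [hr, Option.some_inj] at e
      have := (I.mem_cloned_couplePref.1 hp).2.2.1
      rwa [← e] at this

theorem cloned_coupleWants_of_unclone {I : HRCInst R H} (hM' : I.cloned.IsMatching M') {c : R × R}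
    (hc : c ∈ I.couples) {p : (H × ℕ) × (H × ℕ)} (hp : p ∈ I.cloned.couplePref c)
    (hw : I.CoupleWants (unclone M') c (p.1.1, p.2.1)) : I.cloned.CoupleWants M' c p := by
  refine ⟨hp, ?_⟩
  rcases hw.2 with ⟨h₁, h₂⟩ | ⟨q, -, h₁, h₂, hpref⟩
  · exact Or.inl ⟨unclone_eq_none.1 h₁, unclone_eq_none.1 h₂⟩
  · obtain ⟨k₁, hk₁⟩ := unclone_eq_some.1 h₁
    obtain ⟨k₂, hk₂⟩ := unclone_eq_some.1 h₂
    have hq := hM'.mem_couplePref hc hk₁ hk₂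
    exact Or.inr ⟨_, hq, hk₁, hk₂, (I.prefers_cloned_couplePref_iff hp hq).2 (Or.inl hpref)⟩

variable [DecidableEq R]

def vacantClones (M' : R → Option (H × ℕ)) (h : H) : Finset ℕ :=
  (Finset.range (I.cap h)).filter fun k => assignees M' (h, k) = ∅

theorem mem_vacantClones {h : H} {k : ℕ} :
    k ∈ I.vacantClones M' h ↔ k < I.cap h ∧ assignees M' (h, k) = ∅ := by
  simp [vacantClones]

theorem card_assignees_unclone_add_card_vacantClones
    (hM' : I.cloned.IsMatching M') (h : H) :
    (assignees (unclone M') h).card + (I.vacantClones M' h).card = I.cap h := by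
  have hunion : assignees (unclone M') h =
      (Finset.range (I.cap h)).biUnion fun k => assignees M' (h, k) := by
    ext r
    simp only [mem_assignees, unclone_eq_some, Finset.mem_biUnion, Finset.mem_range]
    exact ⟨fun ⟨k, hk⟩ => ⟨k, I.lt_cap_of_cloned_isMatching hM' hk, hk⟩,
      fun ⟨k, _, hk⟩ => ⟨k, hk⟩⟩
  have hdisj : (Finset.range (I.cap h) : Set ℕ).PairwiseDisjoint fun k => assignees M' (h, k) := by
    intro k _ k' _ hkk'
    refine Finset.disjoint_left.2 fun r hr hr' => hkk' ?_
    rw [mem_assignees] at hr hr'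
    simpa [hr] using hr'
  have hone : ∀ k, (assignees M' (h, k)).card + (if assignees M' (h, k) = ∅ then 1 else 0) = 1 := by
    intro k
    have := hM'.2.2.1 (h, k)
    split_ifs with he
    · simp [he]
    · have := Finset.card_pos.2 (Finset.nonempty_iff_ne_empty.2 he)
      simp only [cloned] at *
      omega
  rw [hunion, Finset.card_biUnion hdisj, vacantClones, Finset.card_filter, ← Finset.sum_add_distrib]
  simp [hone]

theorem isMatching_unclone {I : HRCInst R H} (hM' : I.cloned.IsMatching M') :
    I.IsMatching (unclone M') := by
  refine ⟨fun r hr h hrh => ?_, fun c hc => ?_, fun h => ?_, fun r hr => ?_⟩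
  · obtain ⟨k, hk⟩ := unclone_eq_some.1 hrh
    exact (I.mem_cloned_singlePref.1 (hM'.1 r hr _ hk)).1
  · rcases hM'.2.1 c hc with ⟨h₁, h₂⟩ | ⟨p, hp, h₁, h₂⟩
    · exact Or.inl ⟨unclone_eq_none.2 h₁, unclone_eq_none.2 h₂⟩
    · exact Or.inr ⟨_, (I.mem_cloned_couplePref.1 hp).1, by simp [unclone, h₁],
        by simp [unclone, h₂]⟩
  · have := I.card_assignees_unclone_add_card_vacantClones hM' h
    omega
  · exact hM'.2.2.2 r (by simpa [unclone] using hr)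

end Unclone

section Acceptance

variable {R H : Type} [Fintype R] [DecidableEq R] [DecidableEq H] (I : HRCInst R H)

def Accepts (M : R → Option H) (h : H) (r : R) : Prop :=
  I.UnderSub M h ∨ ∃ r' ∈ assignees M h, I.HPrefers h r r'

def AcceptsBesides (M : R → Option H) (h : H) (r e : R) : Prop :=
  I.UnderSub M h ∨ ∃ r' ∈ (assignees M h).erase e, I.HPrefers h r r'

/-- Conditions (3a)–(3d) of MM-stability. -/
def JointlyAccepts (M : R → Option H) (hk hl : H) (r₁ r₂ : R) : Prop :=
  (hk ≠ hl ∧ I.Accepts M hk r₁ ∧ I.Accepts M hl r₂) ∨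
  (hk = hl ∧ (assignees M hk).card + 2 ≤ I.cap hk) ∨
  (hk = hl ∧ (assignees M hk).card + 1 = I.cap hk ∧
    ∃ r' ∈ assignees M hk, (I.HPrefers hk r₁ r' ∨ I.HPrefers hk r₂ r')) ∨
  (hk = hl ∧ (assignees M hk).card = I.cap hk ∧
    ∃ rs ∈ assignees M hk, ∃ rt ∈ assignees M hk, rs ≠ rt ∧
      I.HPrefers hk r₁ rs ∧ I.HPrefers hk r₂ rt)

variable {I} {M : R → Option H}

theorem acceptsBesides_self {h : H} {r : R} : I.AcceptsBesides M h r r ↔ I.Accepts M h r := by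
  simp only [AcceptsBesides, Accepts, Finset.mem_erase]
  exact or_congr_right ⟨fun ⟨r', ⟨_, hr'⟩, hp⟩ => ⟨r', hr', hp⟩,
    fun ⟨r', hr', hp⟩ => ⟨r', ⟨fun h => Prefers.irrefl r (h ▸ hp), hr'⟩, hp⟩⟩

theorem AcceptsBesides.accepts {h : H} {r e : R} (ha : I.AcceptsBesides M h r e) :
    I.Accepts M h r :=
  ha.imp_right fun ⟨r', hr', hp⟩ => ⟨r', Finset.mem_of_mem_erase hr', hp⟩

theorem cloned_jointlyAccepts_iff {M' : R → Option (H × ℕ)} {p q : H × ℕ} {r₁ r₂ : R} :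
    I.cloned.JointlyAccepts M' p q r₁ r₂ ↔
      p ≠ q ∧ I.cloned.Accepts M' p r₁ ∧ I.cloned.Accepts M' q r₂ := by
  refine ⟨fun h => ?_, Or.inl⟩
  rcases h with h | ⟨-, hb⟩ | ⟨-, hc, r', hr', -⟩ | ⟨-, hd, rs, hrs, rt, hrt, hne, -⟩
  · exact h
  · simp [cloned] at hb
  · simp only [cloned] at hc
    exact absurd (Finset.card_pos.2 ⟨r', hr'⟩) (by omega)
  · simp only [cloned] at hd
    exact absurd (Finset.card_le_one.1 hd.le rs hrs rt hrt) hne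

variable {M' : R → Option (H × ℕ)}

theorem underSub_unclone_iff (hM' : I.cloned.IsMatching M') {h : H} :
    I.UnderSub (unclone M') h ↔ ∃ k < I.cap h, assignees M' (h, k) = ∅ := by
  have hcount := I.card_assignees_unclone_add_card_vacantClones hM' h
  have hvacant : (∃ k < I.cap h, assignees M' (h, k) = ∅) ↔ (I.vacantClones M' h).Nonempty := by
    simp [Finset.Nonempty, I.mem_vacantClones]
  rw [UnderSub, hvacant, ← Finset.card_pos]
  omega

theorem acceptsBesides_unclone_iff (hM' : I.cloned.IsMatching M') {h : H} {r e : R} :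
    I.AcceptsBesides (unclone M') h r e ↔
      ∃ k < I.cap h, I.cloned.AcceptsBesides M' (h, k) r e := by
  simp only [AcceptsBesides, underSub_unclone_iff hM', I.cloned_underSub_iff, Finset.mem_erase,
    mem_assignees, unclone_eq_some]
  constructor
  · rintro (⟨k, hk, he⟩ | ⟨r', ⟨hne, k, hr'⟩, hp⟩)
    · exact ⟨k, hk, Or.inl he⟩
    · exact ⟨k, I.lt_cap_of_cloned_isMatching hM' hr', Or.inr ⟨r', ⟨hne, hr'⟩, hp⟩⟩
  · rintro ⟨k, hk, he | ⟨r', ⟨hne, hr'⟩, hp⟩⟩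
    · exact Or.inl ⟨k, hk, he⟩
    · exact Or.inr ⟨r', ⟨hne, k, hr'⟩, hp⟩

theorem accepts_unclone_iff (hM' : I.cloned.IsMatching M') {h : H} {r : R} :
    I.Accepts (unclone M') h r ↔ ∃ k < I.cap h, I.cloned.Accepts M' (h, k) r := by
  simp only [← acceptsBesides_self, acceptsBesides_unclone_iff hM']

theorem not_cloned_acceptsBesides_of_eq_some (hM' : I.cloned.IsMatching M') {p : H × ℕ}
    {r e : R} (he : M' e = some p) : ¬ I.cloned.AcceptsBesides M' p r e := by
  rintro (hv | ⟨r', hr', -⟩)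
  · rw [I.cloned_underSub_iff, Finset.eq_empty_iff_forall_notMem] at hv
    exact hv e (mem_assignees.2 he)
  · rw [Finset.mem_erase] at hr'
    exact hr'.1 (I.eq_of_mem_assignees_cloned hM' hr'.2 (mem_assignees.2 he))

theorem exists_cloned_of_jointlyAccepts_unclone (hM' : I.cloned.IsMatching M') {g g' : H}
    {r₁ r₂ : R} (hJ : I.JointlyAccepts (unclone M') g g' r₁ r₂) :
    ∃ k < I.cap g, ∃ k' < I.cap g', (g, k) ≠ (g', k') ∧
      I.cloned.Accepts M' (g, k) r₁ ∧ I.cloned.Accepts M' (g', k') r₂ := by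
  have hcount := I.card_assignees_unclone_add_card_vacantClones hM' g
  have hvacant : ∀ {k r}, k ∈ I.vacantClones M' g → I.cloned.Accepts M' (g, k) r :=
    fun hk => Or.inl (I.cloned_underSub_iff.2 (I.mem_vacantClones.1 hk).2)
  have hlt : ∀ {k}, k ∈ I.vacantClones M' g → k < I.cap g := fun hk => (I.mem_vacantClones.1 hk).1
  have hne : ∀ {k κ r'}, k ∈ I.vacantClones M' g → M' r' = some (g, κ) → κ ≠ k :=
    fun hk hr' hκ => by
      rw [I.mem_vacantClones, Finset.eq_empty_iff_forall_notMem] at hk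
      exact hk.2 _ (mem_assignees.2 (hκ ▸ hr'))
  rcases hJ with ⟨hgg, h₁, h₂⟩ | ⟨rfl, hb⟩ | ⟨rfl, hc, r', hr', hp⟩ |
      ⟨rfl, -, rs, hrs, rt, hrt, hst, h₁, h₂⟩
  · obtain ⟨k, hk, h₁⟩ := (accepts_unclone_iff hM').1 h₁
    obtain ⟨k', hk', h₂⟩ := (accepts_unclone_iff hM').1 h₂
    exact ⟨k, hk, k', hk', fun h => hgg (congrArg Prod.fst h), h₁, h₂⟩
  · obtain ⟨k, hk, k', hk', hkk⟩ :=
      Finset.one_lt_card.1 (show 1 < (I.vacantClones M' g).card by omega)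
    exact ⟨k, hlt hk, k', hlt hk', by simpa using hkk, hvacant hk, hvacant hk'⟩
  · obtain ⟨k, hk⟩ := Finset.card_pos.1 (show 0 < (I.vacantClones M' g).card by omega)
    obtain ⟨κ, hκ⟩ := mem_assignees_unclone.1 hr'
    have hκc := I.lt_cap_of_cloned_isMatching hM' hκ
    rcases hp with hp | hp
    · exact ⟨κ, hκc, k, hlt hk, by simpa using hne hk hκ, Or.inr ⟨r', mem_assignees.2 hκ, hp⟩,
        hvacant hk⟩
    · exact ⟨k, hlt hk, κ, hκc, by simpa using (hne hk hκ).symm, hvacant hk,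
        Or.inr ⟨r', mem_assignees.2 hκ, hp⟩⟩
  · obtain ⟨κs, hκs⟩ := mem_assignees_unclone.1 hrs
    obtain ⟨κt, hκt⟩ := mem_assignees_unclone.1 hrt
    refine ⟨κs, I.lt_cap_of_cloned_isMatching hM' hκs, κt, I.lt_cap_of_cloned_isMatching hM' hκt,
      fun h => hst ?_, Or.inr ⟨rs, mem_assignees.2 hκs, h₁⟩, Or.inr ⟨rt, mem_assignees.2 hκt, h₂⟩⟩
    exact I.eq_of_mem_assignees_cloned hM' (mem_assignees.2 hκs) (mem_assignees.2 (h ▸ hκt))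

theorem jointlyAccepts_unclone_of_cloned (hM' : I.cloned.IsMatching M') {g g' : H} {k k' : ℕ}
    {r₁ r₂ : R} (hk : k < I.cap g) (hk' : k' < I.cap g') (hne : (g, k) ≠ (g', k'))
    (h₁ : I.cloned.Accepts M' (g, k) r₁) (h₂ : I.cloned.Accepts M' (g', k') r₂) :
    I.JointlyAccepts (unclone M') g g' r₁ r₂ := by
  by_cases hg : g = g'
  swap
  · exact Or.inl ⟨hg, (accepts_unclone_iff hM').2 ⟨k, hk, h₁⟩,
      (accepts_unclone_iff hM').2 ⟨k', hk', h₂⟩⟩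
  subst hg
  have hkk : k ≠ k' := fun h => hne (h ▸ rfl)
  have hcount := I.card_assignees_unclone_add_card_vacantClones hM' g
  have hvacant : ∀ {k}, k < I.cap g → I.cloned.UnderSub M' (g, k) → k ∈ I.vacantClones M' g :=
    fun hk hv => I.mem_vacantClones.2 ⟨hk, I.cloned_underSub_iff.1 hv⟩
  have hocc : ∀ {k r'}, r' ∈ assignees M' (g, k) → r' ∈ assignees (unclone M') g :=
    fun hr' => mem_assignees_unclone.2 ⟨_, mem_assignees.1 hr'⟩
  right
  rcases Nat.lt_or_ge 1 (I.vacantClones M' g).card with hv | hv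
  · exact Or.inl ⟨rfl, by omega⟩
  rcases h₁ with hv₁ | ⟨u, hu, hpu⟩ <;> rcases h₂ with hv₂ | ⟨w, hw, hpw⟩
  · exact absurd (Finset.one_lt_card.2 ⟨k, hvacant hk hv₁, k', hvacant hk' hv₂, hkk⟩) (by omega)
  · have := Finset.card_pos.2 ⟨k, hvacant hk hv₁⟩
    exact Or.inr (Or.inl ⟨rfl, by omega, w, hocc hw, Or.inr hpw⟩)
  · have := Finset.card_pos.2 ⟨k', hvacant hk' hv₂⟩
    exact Or.inr (Or.inl ⟨rfl, by omega, u, hocc hu, Or.inl hpu⟩)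
  · have huw : u ≠ w := by
      rintro rfl
      rw [mem_assignees] at hu hw
      exact hkk (by simpa [hu] using hw)
    rcases Nat.lt_or_ge 0 (I.vacantClones M' g).card with hv' | hv'
    · exact Or.inr (Or.inl ⟨rfl, by omega, u, hocc hu, Or.inl hpu⟩)
    · exact Or.inr (Or.inr ⟨rfl, by omega, u, hocc hu, w, hocc hw, huw, hpu, hpw⟩)

end Acceptance

section Blocking

variable {R H : Type} [Fintype R] [DecidableEq R] [DecidableEq H] {I : HRCInst R H}
  {M' : R → Option (H × ℕ)}

theorem cloned_mmBlock1_of_unclone (hM' : I.cloned.IsMatching M')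
    (hB : I.MMBlock1 (unclone M')) : I.cloned.MMBlock1 M' := by
  obtain ⟨r, hr, h, hh, hcur, hacc⟩ := hB
  obtain ⟨k, hk, hacc⟩ := (accepts_unclone_iff hM').1 hacc
  have hp : (h, k) ∈ I.cloned.singlePref r := I.mem_cloned_singlePref.2 ⟨hh, hk⟩
  refine ⟨r, hr, (h, k), hp, ?_, hacc⟩
  rcases hcur with hn | ⟨h', hh', hpref⟩
  · exact Or.inl (unclone_eq_none.1 hn)
  · obtain ⟨k', hk'⟩ := unclone_eq_some.1 hh'
    exact Or.inr ⟨(h', k'), hk',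
      (I.prefers_cloned_singlePref_iff hp (hM'.1 r hr _ hk')).2 (Or.inl hpref)⟩

theorem cloned_mmBlock2_of_unclone (hM' : I.cloned.IsMatching M')
    (hB : I.MMBlock2 (unclone M')) : I.cloned.MMBlock2 M' := by
  obtain ⟨c, hc, hi, hj, hci, hcj, g, hmove⟩ := hB
  obtain ⟨ki, hki⟩ := unclone_eq_some.1 hci
  obtain ⟨kj, hkj⟩ := unclone_eq_some.1 hcj
  have hcur := hM'.mem_couplePref hc hki hkj
  refine ⟨c, hc, (hi, ki), (hj, kj), hki, hkj, ?_⟩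
  rcases hmove with ⟨hpref, hacc⟩ | ⟨hpref, hacc⟩
  · obtain ⟨k, hk, hacc⟩ := (acceptsBesides_unclone_iff hM').1 hacc
    have hne : (g, k) ≠ (hj, kj) := fun h =>
      not_cloned_acceptsBesides_of_eq_some hM' (by rw [h]; exact hkj) hacc
    have hnew : ((g, k), (hj, kj)) ∈ I.cloned.couplePref c :=
      I.mem_cloned_couplePref.2 ⟨hpref.1, hk, I.lt_cap_of_cloned_isMatching hM' hkj, hne⟩
    exact ⟨(g, k), Or.inl ⟨(I.prefers_cloned_couplePref_iff hnew hcur).2 (Or.inl hpref), hacc⟩⟩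
  · obtain ⟨k, hk, hacc⟩ := (acceptsBesides_unclone_iff hM').1 hacc
    have hne : (hi, ki) ≠ (g, k) := fun h =>
      not_cloned_acceptsBesides_of_eq_some hM' (by rw [← h]; exact hki) hacc
    have hnew : ((hi, ki), (g, k)) ∈ I.cloned.couplePref c :=
      I.mem_cloned_couplePref.2 ⟨hpref.1, I.lt_cap_of_cloned_isMatching hM' hki, hk, hne⟩
    exact ⟨(g, k), Or.inr ⟨(I.prefers_cloned_couplePref_iff hnew hcur).2 (Or.inl hpref), hacc⟩⟩

theorem cloned_mmBlock3_of_unclone (hM' : I.cloned.IsMatching M')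
    (hB : I.MMBlock3 (unclone M')) : I.cloned.MMBlock3 M' := by
  obtain ⟨c, hc, g, g', h₁, h₂, hw, hJ⟩ := hB
  obtain ⟨k, hk, k', hk', hne, hacc₁, hacc₂⟩ := exists_cloned_of_jointlyAccepts_unclone hM' hJ
  have hp : ((g, k), (g', k')) ∈ I.cloned.couplePref c :=
    I.mem_cloned_couplePref.2 ⟨hw.1, hk, hk', hne⟩
  exact ⟨c, hc, (g, k), (g', k'), fun h => h₁ (unclone_eq_some.2 ⟨k, h⟩),
    fun h => h₂ (unclone_eq_some.2 ⟨k', h⟩), cloned_coupleWants_of_unclone hM' hc hp hw,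
    cloned_jointlyAccepts_iff.2 ⟨hne, hacc₁, hacc₂⟩⟩

theorem mmStable_unclone (hM' : I.cloned.MMStable M') : I.MMStable (unclone M') :=
  ⟨isMatching_unclone hM'.1, fun h => hM'.2.1 (cloned_mmBlock1_of_unclone hM'.1 h),
    fun h => hM'.2.2.1 (cloned_mmBlock2_of_unclone hM'.1 h),
    fun h => hM'.2.2.2 (cloned_mmBlock3_of_unclone hM'.1 h)⟩

variable (I) in
def IsCloneOrdered (M' : R → Option (H × ℕ)) : Prop :=
  ∀ r h k, M' r = some (h, k) → ∀ k' < k, ¬ I.cloned.Accepts M' (h, k') r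

/-- `r` may take the clone that `e` vacates when `e` moves to another clone of its hospital. -/
theorem acceptsBesides_unclone_of_cloned_accepts (hM' : I.cloned.IsMatching M') {h h' : H}
    {k k' kₑ : ℕ} {r e : R} (hk : k < I.cap h) (hr : I.cloned.Accepts M' (h, k) r)
    (hk' : k' < I.cap h') (he : I.cloned.Accepts M' (h', k') e) (hkₑ : M' e = some (h', kₑ))
    (hne : kₑ ≠ k') : I.AcceptsBesides (unclone M') h r e := by
  have hocc : ∀ {p u}, u ∈ assignees M' p → M' e ≠ some p → u ∈ (assignees M' p).erase e :=
    fun hu hep => Finset.mem_erase.2 ⟨fun h => hep (h ▸ mem_assignees.1 hu), hu⟩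
  rw [acceptsBesides_unclone_iff hM']
  by_cases hek : M' e = some (h, k)
  · obtain ⟨rfl, rfl⟩ : h = h' ∧ k = kₑ := by simpa [hkₑ, eq_comm] using hek
    have hre : I.HPrefers h r e := by
      rcases hr with hv | ⟨u, hu, hru⟩
      · rw [I.cloned_underSub_iff, Finset.eq_empty_iff_forall_notMem] at hv
        exact absurd (mem_assignees.2 hek) (hv e)
      · rwa [I.eq_of_mem_assignees_cloned hM' hu (mem_assignees.2 hek)] at hru
    refine ⟨k', hk', he.imp_right fun ⟨w, hw, hew⟩ => ⟨w, hocc hw ?_, hre.trans hew⟩⟩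
    simpa [hkₑ] using hne
  · exact ⟨k, hk, hr.imp_right fun ⟨u, hu, hru⟩ => ⟨u, hocc hu hek, hru⟩⟩

theorem mmBlock1_unclone_of_cloned (hM' : I.cloned.IsMatching M') (hord : I.IsCloneOrdered M')
    (hB : I.cloned.MMBlock1 M') : I.MMBlock1 (unclone M') := by
  obtain ⟨r, hr, ⟨h, k⟩, hp, hcur, hacc⟩ := hB
  obtain ⟨hh, hk⟩ := I.mem_cloned_singlePref.1 hp
  refine ⟨r, hr, h, hh, ?_, (accepts_unclone_iff hM').2 ⟨k, hk, hacc⟩⟩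
  rcases hcur with hn | ⟨⟨h', k'⟩, hk', hpref⟩
  · exact Or.inl (unclone_eq_none.2 hn)
  · rcases (I.prefers_cloned_singlePref_iff hp (hM'.1 r hr _ hk')).1 hpref with
      hpref | ⟨rfl, hlt⟩
    · exact Or.inr ⟨h', unclone_eq_some.2 ⟨k', hk'⟩, hpref⟩
    · exact absurd hacc (hord r h k' hk' k hlt)

theorem mmBlock2_unclone_of_cloned (hM' : I.cloned.IsMatching M') (hord : I.IsCloneOrdered M')
    (hB : I.cloned.MMBlock2 M') : I.MMBlock2 (unclone M') := by
  obtain ⟨c, hc, ⟨hi, ki⟩, ⟨hj, kj⟩, hki, hkj, ⟨g, κ⟩, hmove⟩ := hB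
  refine ⟨c, hc, hi, hj, unclone_eq_some.2 ⟨ki, hki⟩, unclone_eq_some.2 ⟨kj, hkj⟩, g, ?_⟩
  have hcur := hM'.mem_couplePref hc hki hkj
  rcases hmove with ⟨hpref, hacc⟩ | ⟨hpref, hacc⟩
  · have hκ := (I.mem_cloned_couplePref.1 hpref.1).2.1
    rcases (I.prefers_cloned_couplePref_iff hpref.1 hcur).1 hpref with hpref | ⟨he, hlt⟩
    · exact Or.inl ⟨hpref, (acceptsBesides_unclone_iff hM').2 ⟨κ, hκ, hacc⟩⟩
    · obtain ⟨rfl, -⟩ := Prod.mk.inj he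
      exact absurd (AcceptsBesides.accepts hacc) (hord c.1 g ki hki κ (by simpa using hlt))
  · have hκ := (I.mem_cloned_couplePref.1 hpref.1).2.2.1
    rcases (I.prefers_cloned_couplePref_iff hpref.1 hcur).1 hpref with hpref | ⟨he, hlt⟩
    · exact Or.inr ⟨hpref, (acceptsBesides_unclone_iff hM').2 ⟨κ, hκ, hacc⟩⟩
    · obtain ⟨-, rfl⟩ := Prod.mk.inj he
      exact absurd (AcceptsBesides.accepts hacc) (hord c.2 g kj hkj κ (by simpa using hlt))

theorem mmBlock2_or_mmBlock3_unclone_of_cloned (hM' : I.cloned.IsMatching M')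
    (hord : I.IsCloneOrdered M') (hB : I.cloned.MMBlock3 M') :
    I.MMBlock2 (unclone M') ∨ I.MMBlock3 (unclone M') := by
  obtain ⟨c, hc, ⟨g, κ⟩, ⟨g', l⟩, h₁, h₂, ⟨hp, hw⟩, hJ⟩ := hB
  obtain ⟨hne, hacc₁, hacc₂⟩ := cloned_jointlyAccepts_iff.1 hJ
  obtain ⟨hmem, hκ, hl, -⟩ := I.mem_cloned_couplePref.1 hp
  simp only at hmem hκ hl
  have hJ' := jointlyAccepts_unclone_of_cloned hM' hκ hl hne hacc₁ hacc₂
  rcases hw with ⟨hn₁, hn₂⟩ | ⟨⟨⟨hi, ki⟩, ⟨hj, kj⟩⟩, hq, hki, hkj, hpref⟩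
  · exact Or.inr ⟨c, hc, g, g', by simp [unclone, hn₁], by simp [unclone, hn₂],
      ⟨hmem, Or.inl ⟨unclone_eq_none.2 hn₁, unclone_eq_none.2 hn₂⟩⟩, hJ'⟩
  simp only at hki hkj
  have hci : unclone M' c.1 = some hi := unclone_eq_some.2 ⟨ki, hki⟩
  have hcj : unclone M' c.2 = some hj := unclone_eq_some.2 ⟨kj, hkj⟩
  rcases (I.prefers_cloned_couplePref_iff hp hq).1 hpref with hpref | ⟨he, hlt⟩
  · -- a member that stays at its hospital turns the move into one of type (2) for its partner
    by_cases hgi : g = hi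
    · subst hgi
      have hκki : ki ≠ κ := fun h => h₁ (by rw [hki, h])
      exact Or.inl ⟨c, hc, g, hj, hci, hcj, g', Or.inr ⟨hpref,
        acceptsBesides_unclone_of_cloned_accepts hM' hl hacc₂ hκ hacc₁ hki hκki⟩⟩
    by_cases hgj : g' = hj
    · subst hgj
      have hlkj : kj ≠ l := fun h => h₂ (by rw [hkj, h])
      exact Or.inl ⟨c, hc, hi, g', hci, hcj, g, Or.inl ⟨hpref,
        acceptsBesides_unclone_of_cloned_accepts hM' hκ hacc₁ hl hacc₂ hkj hlkj⟩⟩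
    exact Or.inr ⟨c, hc, g, g', by simpa [hci] using Ne.symm hgi, by simpa [hcj] using Ne.symm hgj,
      ⟨hmem, Or.inr ⟨(hi, hj), hpref.2.1, hci, hcj, hpref⟩⟩, hJ'⟩
  · obtain ⟨-, rfl⟩ := Prod.mk.inj he
    have hlkj : kj ≠ l := fun h => h₂ (by rw [hkj, h])
    have : l < kj := by simp only at hlt; omega
    exact absurd hacc₂ (hord c.2 g' kj hkj l this)

theorem mmStable_cloned_of_mmStable_unclone (hM' : I.cloned.IsMatching M')
    (hord : I.IsCloneOrdered M') (hM : I.MMStable (unclone M')) : I.cloned.MMStable M' :=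
  ⟨hM', fun h => hM.2.1 (mmBlock1_unclone_of_cloned hM' hord h),
    fun h => hM.2.2.1 (mmBlock2_unclone_of_cloned hM' hord h),
    fun h => (mmBlock2_or_mmBlock3_unclone_of_cloned hM' hord h).elim hM.2.2.1 hM.2.2.2⟩

end Blocking

section CloneMatching

variable {R H : Type} [Fintype R] [DecidableEq R] [DecidableEq H] (I : HRCInst R H)

instance (h : H) (r r' : R) : Decidable (I.HPrefers h r r') :=
  inferInstanceAs (Decidable (Prefers _ _ _))

def rank (M : R → Option H) (h : H) (r : R) : ℕ :=
  ((assignees M h).filter fun r' => I.HPrefers h r' r).card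

def cloneMatching (M : R → Option H) : R → Option (H × ℕ) :=
  fun r => (M r).map fun h => (h, I.rank M h r)

variable {I} {M : R → Option H}

theorem unclone_cloneMatching : unclone (I.cloneMatching M) = M := by
  funext r
  simp [unclone, cloneMatching, Option.map_map, Function.comp_def]

theorem cloneMatching_eq_some {r : R} {h : H} {k : ℕ} :
    I.cloneMatching M r = some (h, k) ↔ M r = some h ∧ I.rank M h r = k := by
  simp only [cloneMatching, Option.map_eq_some_iff, Prod.mk.injEq]
  constructor
  · rintro ⟨h', hr, rfl, rfl⟩
    exact ⟨hr, rfl⟩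
  · rintro ⟨hr, rfl⟩
    exact ⟨h, hr, rfl, rfl⟩

theorem rank_lt_card {h : H} {r : R} (hr : r ∈ assignees M h) :
    I.rank M h r < (assignees M h).card :=
  Finset.card_lt_card (Finset.filter_ssubset.2 ⟨r, hr, Prefers.irrefl r⟩)

theorem rank_lt_rank {h : H} {r r' : R} (hr : r ∈ assignees M h) (hrr' : I.HPrefers h r r') :
    I.rank M h r < I.rank M h r' := by
  refine Finset.card_lt_card ⟨fun u hu => ?_, fun hsub => ?_⟩
  · rw [Finset.mem_filter] at hu ⊢
    exact ⟨hu.1, hu.2.trans hrr'⟩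
  · have := Finset.mem_filter.1 (hsub (Finset.mem_filter.2 ⟨hr, hrr'⟩))
    exact Prefers.irrefl r this.2

theorem rank_injOn (hwf : I.WellFormed) (hM : I.IsMatching M) (h : H) :
    Set.InjOn (I.rank M h) (assignees M h) := by
  intro r hr r' hr' heq
  by_contra hne
  rcases Prefers.total (I.mem_hospPref_of_mem_assignees hwf hM hr)
    (I.mem_hospPref_of_mem_assignees hwf hM hr') hne with hp | hp
  · exact (rank_lt_rank hr hp).ne heq
  · exact (rank_lt_rank hr' hp).ne heq.symm

theorem exists_rank_eq (hwf : I.WellFormed) (hM : I.IsMatching M) {h : H} {k : ℕ}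
    (hk : k < (assignees M h).card) : ∃ r ∈ assignees M h, I.rank M h r = k := by
  have himage : (assignees M h).image (I.rank M h) = Finset.range (assignees M h).card := by
    refine Finset.eq_of_subset_of_card_le (fun k hk => ?_) ?_
    · obtain ⟨r, hr, rfl⟩ := Finset.mem_image.1 hk
      exact Finset.mem_range.2 (rank_lt_card hr)
    · rw [Finset.card_range, Finset.card_image_of_injOn (rank_injOn hwf hM h)]
  have hk' : k ∈ (assignees M h).image (I.rank M h) := himage ▸ Finset.mem_range.2 hk
  simpa using hk'

theorem isMatching_cloneMatching (hwf : I.WellFormed) (hM : I.IsMatching M) :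
    I.cloned.IsMatching (I.cloneMatching M) := by
  have hlt : ∀ {h r}, M r = some h → I.rank M h r < I.cap h := fun hr =>
    (rank_lt_card (mem_assignees.2 hr)).trans_le (hM.2.2.1 _)
  refine ⟨fun r hr ⟨h, k⟩ hrk => ?_, fun c hc => ?_, fun ⟨h, k⟩ => ?_, fun r hr => ?_⟩
  · obtain ⟨hrh, rfl⟩ := cloneMatching_eq_some.1 hrk
    exact I.mem_cloned_singlePref.2 ⟨hM.1 r hr h hrh, hlt hrh⟩
  · rcases hM.2.1 c hc with ⟨h₁, h₂⟩ | ⟨hp, hmem, h₁, h₂⟩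
    · exact Or.inl ⟨by simp [cloneMatching, h₁], by simp [cloneMatching, h₂]⟩
    refine Or.inr ⟨((hp.1, I.rank M hp.1 c.1), (hp.2, I.rank M hp.2 c.2)),
      I.mem_cloned_couplePref.2 ⟨hmem, hlt h₁, hlt h₂, fun heq => ?_⟩,
      by simp [cloneMatching, h₁], by simp [cloneMatching, h₂]⟩
    have hinj := rank_injOn hwf hM hp.1
    obtain ⟨-, -, -, -, -, -, hdistinct, -⟩ := hwf
    obtain ⟨he, hrk⟩ := Prod.mk.inj heq
    rw [← he] at h₂ hrk
    exact hdistinct c hc (hinj (mem_assignees.2 h₁) (mem_assignees.2 h₂) hrk)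
  · refine Finset.card_le_one.2 fun r hr r' hr' => ?_
    rw [mem_assignees, cloneMatching_eq_some] at hr hr'
    exact rank_injOn hwf hM h (mem_assignees.2 hr.1) (mem_assignees.2 hr'.1) (hr.2.trans hr'.2.symm)
  · exact hM.2.2.2 r (by simpa [cloneMatching] using hr)

theorem isCloneOrdered_cloneMatching (hwf : I.WellFormed) (hM : I.IsMatching M) :
    I.IsCloneOrdered (I.cloneMatching M) := by
  intro r h k hrk k' hk' hacc
  obtain ⟨hrh, rfl⟩ := cloneMatching_eq_some.1 hrk
  have hr := mem_assignees.2 hrh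
  rcases hacc with hv | ⟨u, hu, hru⟩
  · obtain ⟨u, hu, rfl⟩ := exists_rank_eq hwf hM (hk'.trans (rank_lt_card hr))
    rw [I.cloned_underSub_iff, Finset.eq_empty_iff_forall_notMem] at hv
    exact hv u (mem_assignees.2 (cloneMatching_eq_some.2 ⟨mem_assignees.1 hu, rfl⟩))
  · obtain ⟨-, rfl⟩ := cloneMatching_eq_some.1 (mem_assignees.1 hu)
    exact absurd (rank_lt_rank hr hru) (by omega)

end CloneMatching

end HRCInst

/-- `I` admits an MM-stable matching if and only if the cloned one-to-one instance
`I'` admits an MM-stable matching. -/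
theorem mmStable_iff_cloned_mmStable {R H : Type}
    [Fintype R] [DecidableEq R] [DecidableEq H]
    (I : HRCInst R H) (hwf : I.WellFormed) :
    (∃ M : R → Option H, I.MMStable M) ↔
    (∃ M' : R → Option (H × ℕ), I.cloned.MMStable M') := by
  constructor
  · rintro ⟨M, hM⟩
    refine ⟨I.cloneMatching M, HRCInst.mmStable_cloned_of_mmStable_unclone
      (HRCInst.isMatching_cloneMatching hwf hM.1) (HRCInst.isCloneOrdered_cloneMatching hwf hM.1)
      ?_⟩
    rwa [HRCInst.unclone_cloneMatching]
  · rintro ⟨M', hM'⟩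
    exact ⟨HRCInst.unclone M', HRCInst.mmStable_unclone hM'⟩
end
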